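/- Let −π < θ_1 < θ_2 ≤ π with θ_2 − θ_1 ≠ π, and let z be a point of the open unit disk such that the four points 0, e^{iθ_1}, e^{iθ_2}, z ∈ ℂ are concyclic (lie on a common circle). Then ∫_{θ_1}^{θ_2} P(z,t) dt = (θ_2 − θ_1)/(2π). Consequently, for the partition of the circle into the two arcs determined by θ_1, θ_2 (the case n = 2) and any strictly convex f with f(1) = 0, the reduced f-divergence distance from z to the origin is 0 even when z ≠ 0. -/

import Mathlib

/-!
With `ζ(u) = 1 - conj z · e^{iu}` one has `|z - e^{iu}| = |ζ(u)|` and `1 - |z|² = 2 Re ζ - |ζ|²`,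
so `P(z, ·)` has the primitive `(u - 2 arg ζ(u)) / (2π)`; since `Re ζ > 0` on the disk,
`arg ζ = arctan (Im ζ / Re ζ)`. Inversion in the unit circle fixes `e^{iθ₁}, e^{iθ₂}` and maps the
circle through `0, e^{iθ₁}, e^{iθ₂}` to the line through them, so `1 / conj z` lies on that line
and `ζ(θ₂) / ζ(θ₁)` is real: the two arguments agree, and the integral reduces to
`(θ₂ - θ₁) / (2π)`. Both terms of the divergence are then `φ_j(0) · f 1 = 0`.
-/

noncomputable def poisson (z : ℂ) (θ : ℝ) : ℝ :=
  (1 / (2 * Real.pi)) * (1 - ‖z‖ ^ 2) /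
    ‖z - Complex.exp (θ * Complex.I)‖ ^ 2

open Real ComplexConjugate

noncomputable def poissonFactor (z : ℂ) (u : ℝ) : ℂ := 1 - conj z * Complex.exp (u * Complex.I)

section

variable (z : ℂ) (u : ℝ)

@[simp]
theorem poissonFactor_re : (poissonFactor z u).re = 1 - z.re * cos u - z.im * sin u := by
  simp only [poissonFactor, Complex.sub_re, Complex.one_re, Complex.mul_re, Complex.conj_re,
    Complex.conj_im, Complex.exp_ofReal_mul_I_re, Complex.exp_ofReal_mul_I_im]
  ring

@[simp]
theorem poissonFactor_im : (poissonFactor z u).im = z.im * cos u - z.re * sin u := by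
  simp only [poissonFactor, Complex.sub_im, Complex.one_im, Complex.mul_im, Complex.conj_re,
    Complex.conj_im, Complex.exp_ofReal_mul_I_re, Complex.exp_ofReal_mul_I_im]
  ring

theorem normSq_poissonFactor :
    Complex.normSq (poissonFactor z u) = ‖z - Complex.exp (u * Complex.I)‖ ^ 2 := by
  rw [Complex.sq_norm, Complex.normSq_apply, Complex.normSq_apply, poissonFactor_re,
    poissonFactor_im]
  simp only [Complex.sub_re, Complex.sub_im, Complex.exp_ofReal_mul_I_re,
    Complex.exp_ofReal_mul_I_im]
  linear_combination (z.re ^ 2 + z.im ^ 2 - 1) * sin_sq_add_cos_sq u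

theorem two_mul_re_sub_normSq_poissonFactor :
    2 * (poissonFactor z u).re - Complex.normSq (poissonFactor z u) = 1 - ‖z‖ ^ 2 := by
  rw [Complex.normSq_apply, Complex.sq_norm, Complex.normSq_apply, poissonFactor_re,
    poissonFactor_im]
  linear_combination (-(z.re * z.re) - z.im * z.im) * sin_sq_add_cos_sq u

theorem hasDerivAt_poissonFactor_re :
    HasDerivAt (fun u => (poissonFactor z u).re) (-(poissonFactor z u).im) u := by
  simp only [poissonFactor_re, poissonFactor_im]
  exact (((hasDerivAt_const u 1).sub ((hasDerivAt_cos u).const_mul z.re)).sub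
    ((hasDerivAt_sin u).const_mul z.im)).congr_deriv (by ring)

theorem hasDerivAt_poissonFactor_im :
    HasDerivAt (fun u => (poissonFactor z u).im) ((poissonFactor z u).re - 1) u := by
  simp only [poissonFactor_im, poissonFactor_re]
  exact (((hasDerivAt_cos u).const_mul z.im).sub
    ((hasDerivAt_sin u).const_mul z.re)).congr_deriv (by ring)

variable {z}

theorem poissonFactor_re_pos (hz : ‖z‖ < 1) : 0 < (poissonFactor z u).re := by
  have h : (conj z * Complex.exp (u * Complex.I)).re < 1 :=
    calc (conj z * Complex.exp (u * Complex.I)).re ≤ ‖conj z * Complex.exp (u * Complex.I)‖ :=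
          Complex.re_le_norm _
      _ = ‖z‖ := by rw [norm_mul, Complex.norm_exp_ofReal_mul_I, mul_one, RCLike.norm_conj]
      _ < 1 := hz
  rw [poissonFactor, Complex.sub_re, Complex.one_re]
  linarith

theorem normSq_poissonFactor_pos (hz : ‖z‖ < 1) : 0 < Complex.normSq (poissonFactor z u) :=
  Complex.normSq_pos.2 fun h => (poissonFactor_re_pos u hz).ne' (by rw [h, Complex.zero_re])

end

theorem poisson_eq (z : ℂ) :
    poisson z = fun u => (1 - ‖z‖ ^ 2) / Complex.normSq (poissonFactor z u) / (2 * π) := by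
  ext u
  rw [poisson, normSq_poissonFactor]
  ring

theorem continuous_poisson {z : ℂ} (hz : ‖z‖ < 1) : Continuous (poisson z) := by
  rw [poisson_eq]
  have hcont : Continuous fun u => Complex.normSq (poissonFactor z u) := by
    unfold poissonFactor
    fun_prop
  exact (continuous_const.div hcont fun u => (normSq_poissonFactor_pos u hz).ne').div_const _

noncomputable def poissonPrimitive (z : ℂ) (u : ℝ) : ℝ :=
  (u - 2 * arctan ((poissonFactor z u).im / (poissonFactor z u).re)) / (2 * π)

theorem hasDerivAt_poissonPrimitive {z : ℂ} (hz : ‖z‖ < 1) (u : ℝ) :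
    HasDerivAt (poissonPrimitive z) (poisson z u) u := by
  have hre := (poissonFactor_re_pos u hz).ne'
  have hζ := (normSq_poissonFactor_pos u hz).ne'
  refine (((hasDerivAt_id u).sub (((hasDerivAt_poissonFactor_im z u).div
    (hasDerivAt_poissonFactor_re z u) hre).arctan.const_mul 2)).div_const (2 * π)).congr_deriv ?_
  rw [poisson_eq, ← two_mul_re_sub_normSq_poissonFactor z u]
  simp only [Pi.div_apply, Complex.normSq_apply] at hζ ⊢
  field_simp
  ring

theorem integral_poisson_eq_sub {z : ℂ} (hz : ‖z‖ < 1) (a b : ℝ) :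
    ∫ t in a..b, poisson z t = poissonPrimitive z b - poissonPrimitive z a :=
  intervalIntegral.integral_eq_sub_of_hasDerivAt (fun u _ => hasDerivAt_poissonPrimitive hz u)
    ((continuous_poisson hz).intervalIntegrable a b)

theorem EuclideanGeometry.Cospherical.exists_norm_sq_eq_two_mul_inner
    {V : Type*} [NormedAddCommGroup V] [InnerProductSpace ℝ V] {s : Set V}
    (hs : EuclideanGeometry.Cospherical s) (h0 : (0 : V) ∈ s) :
    ∃ c : V, ∀ p ∈ s, ‖p‖ ^ 2 = 2 * inner ℝ p c := by
  obtain ⟨c, r, hcr⟩ := hs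
  refine ⟨c, fun p hp => ?_⟩
  have hp : ‖p - c‖ = ‖c‖ := by
    rw [← dist_eq_norm, hcr p hp, ← hcr 0 h0, dist_eq_norm, zero_sub, norm_neg]
  have := norm_sub_sq_real p c
  rw [hp] at this
  linarith

theorem poissonFactor_im_mul_re_eq_of_cospherical {z : ℂ} {θ₁ θ₂ : ℝ}
    (h : EuclideanGeometry.Cospherical
      ({0, Complex.exp (θ₁ * Complex.I), Complex.exp (θ₂ * Complex.I), z} : Set ℂ)) :
    (poissonFactor z θ₂).im * (poissonFactor z θ₁).re =
      (poissonFactor z θ₁).im * (poissonFactor z θ₂).re := by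
  obtain ⟨c, hc⟩ := h.exists_norm_sq_eq_two_mul_inner (by simp)
  have h₁ := hc (Complex.exp (θ₁ * Complex.I)) (by simp)
  have h₂ := hc (Complex.exp (θ₂ * Complex.I)) (by simp)
  have hz := hc z (by simp)
  simp only [Complex.inner, Complex.norm_exp_ofReal_mul_I, Complex.sq_norm, Complex.normSq_apply,
    Complex.mul_re, Complex.conj_re, Complex.conj_im, Complex.exp_ofReal_mul_I_re,
    Complex.exp_ofReal_mul_I_im] at h₁ h₂ hz
  simp only [poissonFactor_re, poissonFactor_im]
  -- `h₁, h₂` give `sin (θ₂ - θ₁) • c` in closed form, and `hz` then eliminates `c`.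
  linear_combination (z.im * cos θ₂ - z.re * sin θ₂) * h₁ + (z.re * sin θ₁ - z.im * cos θ₁) * h₂
    + (cos θ₁ * sin θ₂ - sin θ₁ * cos θ₂) * hz

theorem poissonPrimitive_sub_of_cospherical {z : ℂ} (hz : ‖z‖ < 1) {θ₁ θ₂ : ℝ}
    (h : EuclideanGeometry.Cospherical
      ({0, Complex.exp (θ₁ * Complex.I), Complex.exp (θ₂ * Complex.I), z} : Set ℂ)) :
    poissonPrimitive z θ₂ - poissonPrimitive z θ₁ = (θ₂ - θ₁) / (2 * π) := by
  have hslope : (poissonFactor z θ₂).im / (poissonFactor z θ₂).re =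
      (poissonFactor z θ₁).im / (poissonFactor z θ₁).re :=
    (div_eq_div_iff (poissonFactor_re_pos θ₂ hz).ne' (poissonFactor_re_pos θ₁ hz).ne').2
      (poissonFactor_im_mul_re_eq_of_cospherical h)
  rw [poissonPrimitive, poissonPrimitive, hslope]
  ring

theorem mul_apply_div_self_eq_zero {f : ℝ → ℝ} (hf : f 1 = 0) (a : ℝ) : a * f (a / a) = 0 := by
  rcases eq_or_ne a 0 with rfl | ha
  · exact zero_mul _
  · rw [div_self ha, hf, mul_zero]

theorem n_eq_two_degenerate_general
    (θ₁ θ₂ : ℝ)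
    (z : ℂ) (hz : ‖z‖ < 1)
    (hcirc : EuclideanGeometry.Cospherical
      ({0, Complex.exp (θ₁ * Complex.I), Complex.exp (θ₂ * Complex.I), z} : Set ℂ)) :
    (∫ t in θ₁..θ₂, poisson z t) = (θ₂ - θ₁) / (2 * Real.pi) ∧
    ∀ f : ℝ → ℝ, StrictConvexOn ℝ (Set.Ioi 0) f → f 1 = 0 →
      ((θ₂ - θ₁) / (2 * Real.pi)) *
          f ((∫ t in θ₁..θ₂, poisson z t) / ((θ₂ - θ₁) / (2 * Real.pi))) +
        (1 - (θ₂ - θ₁) / (2 * Real.pi)) *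
          f ((1 - ∫ t in θ₁..θ₂, poisson z t) / (1 - (θ₂ - θ₁) / (2 * Real.pi))) = 0 := by
  have hint : (∫ t in θ₁..θ₂, poisson z t) = (θ₂ - θ₁) / (2 * π) := by
    rw [integral_poisson_eq_sub hz, poissonPrimitive_sub_of_cospherical hz hcirc]
  refine ⟨hint, fun f _ hf => ?_⟩
  rw [hint, mul_apply_div_self_eq_zero hf, mul_apply_div_self_eq_zero hf, add_zero]

/-- **Degeneracy of the case `n = 2`.**  Let `−π < θ₁ < θ₂ ≤ π` with `θ₂ − θ₁ ≠ π`,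
and let `z` be a point of the open unit disk such that `0, e^{iθ₁}, e^{iθ₂}, z` lie on a
common circle.  Then `∫_{θ₁}^{θ₂} P(z,t) dt = (θ₂ − θ₁)/(2π)`; consequently, for the
two-arc partition determined by `θ₁, θ₂` and any strictly convex `f` with `f(1) = 0`,
the reduced `f`-divergence distance from `z` to the origin vanishes even when `z ≠ 0`. -/
theorem n_eq_two_degenerate
    (θ₁ θ₂ : ℝ) (h1 : -Real.pi < θ₁) (h12 : θ₁ < θ₂) (h2 : θ₂ ≤ Real.pi)
    (hne : θ₂ - θ₁ ≠ Real.pi)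
    (z : ℂ) (hz : ‖z‖ < 1)
    (hcirc : EuclideanGeometry.Cospherical
      ({0, Complex.exp (θ₁ * Complex.I), Complex.exp (θ₂ * Complex.I), z} : Set ℂ)) :
    (∫ t in θ₁..θ₂, poisson z t) = (θ₂ - θ₁) / (2 * Real.pi) ∧
    ∀ f : ℝ → ℝ, StrictConvexOn ℝ (Set.Ioi 0) f → f 1 = 0 →
      ((θ₂ - θ₁) / (2 * Real.pi)) *
          f ((∫ t in θ₁..θ₂, poisson z t) / ((θ₂ - θ₁) / (2 * Real.pi))) +
        (1 - (θ₂ - θ₁) / (2 * Real.pi)) *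
          f ((1 - ∫ t in θ₁..θ₂, poisson z t) / (1 - (θ₂ - θ₁) / (2 * Real.pi))) = 0 :=
  n_eq_two_degenerate_general θ₁ θ₂ z hz hcirc
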